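/- arXiv:2207.05852 — 2 statements merged into one kernel-verified Lean document; each statement's English description precedes it below -/
import Mathlib

section
/- Proposition 1(iii): If the MDP has deterministic transitions, then for every stage h ∈ {1,...,H}, state s ∈ S and action a ∈ A such that there exists at least one policy π ∈ Π with p^π_h(s,a) > 0, the conditional return gap equals the return gap: Δtilde_h(s,a) = Δbar_h(s,a). -/
/-- A finite episodic MDP with horizon `H`, initial state `s1`,
transition kernel `p h s a s'` and mean rewards `r h s a` (for stages `h ∈ {1,…,H}`). -/
structure MDP (S A : Type) [Fintype S] [Fintype A] where
  H : ℕ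
  H_pos : 1 ≤ H
  s1 : S
  p : ℕ → S → A → S → ℝ
  r : ℕ → S → A → ℝ
  p_nonneg : ∀ h s a s', 1 ≤ h → h ≤ H → 0 ≤ p h s a s'
  p_sum_one : ∀ h s a, 1 ≤ h → h ≤ H → ∑ s' : S, p h s a s' = 1
  r_nonneg : ∀ h s a, 1 ≤ h → h ≤ H → 0 ≤ r h s a
  r_le_one : ∀ h s a, 1 ≤ h → h ≤ H → r h s a ≤ 1

namespace MDP

variable {S A : Type} [Fintype S] [Fintype A] [DecidableEq S] [DecidableEq A]
variable (M : MDP S A)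

/-- Fuel-indexed value of policy `π`: `polValAux M π k s = V^π_{H+1-k}(s)`. -/
noncomputable def polValAux (π : ℕ → S → A) : ℕ → S → ℝ
  | 0, _ => 0
  | k + 1, s =>
      M.r (M.H - k) s (π (M.H - k) s) +
        ∑ s' : S, M.p (M.H - k) s (π (M.H - k) s) s' * polValAux π k s'

/-- `V^π_h(s)`, for `1 ≤ h ≤ H + 1`. -/
noncomputable def polVal (π : ℕ → S → A) (h : ℕ) (s : S) : ℝ :=
  M.polValAux π (M.H + 1 - h) s

/-- `Q^π_h(s,a)`. -/
noncomputable def polQ (π : ℕ → S → A) (h : ℕ) (s : S) (a : A) : ℝ :=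
  M.r h s a + ∑ s' : S, M.p h s a s' * M.polVal π (h + 1) s'

/-- Fuel-indexed optimal value: `optValAux M k s = V*_{H+1-k}(s)`. -/
noncomputable def optValAux : ℕ → S → ℝ
  | 0, _ => 0
  | k + 1, s =>
      ⨆ a : A, (M.r (M.H - k) s a + ∑ s' : S, M.p (M.H - k) s a s' * optValAux k s')

/-- `V*_h(s)`, for `1 ≤ h ≤ H + 1`. -/
noncomputable def optVal (h : ℕ) (s : S) : ℝ := M.optValAux (M.H + 1 - h) s

/-- `Q*_h(s,a)`. -/
noncomputable def optQ (h : ℕ) (s : S) (a : A) : ℝ :=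
  M.r h s a + ∑ s' : S, M.p h s a s' * M.optVal (h + 1) s'

/-- Visitation probability `p^π_h(s)`, for `1 ≤ h ≤ H`. -/
noncomputable def visit (π : ℕ → S → A) : ℕ → S → ℝ
  | 0, _ => 0
  | 1, s => if s = M.s1 then 1 else 0
  | h + 2, s' => ∑ s : S, visit π (h + 1) s * M.p (h + 1) s (π (h + 1) s) s'

/-- State-action visitation probability `p^π_h(s,a)`. -/
noncomputable def visitSA (π : ℕ → S → A) (h : ℕ) (s : S) (a : A) : ℝ :=
  if π h s = a then M.visit π h s else 0

/-- Fuel-indexed conditional visitation: `cvisitAux M π s h k s' = p^π_{h+k}(s' | s, h)`. -/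
noncomputable def cvisitAux (π : ℕ → S → A) (s : S) (h : ℕ) : ℕ → S → ℝ
  | 0, s' => if s' = s then 1 else 0
  | k + 1, s' =>
      ∑ s'' : S, cvisitAux π s h k s'' * M.p (h + k) s'' (π (h + k) s'') s'

/-- Conditional visitation probability `p^π_ℓ(s' | s, h)`, for `h ≤ ℓ`. -/
noncomputable def cvisit (π : ℕ → S → A) (s : S) (h ℓ : ℕ) (s' : S) : ℝ :=
  M.cvisitAux π s h (ℓ - h) s'

/-- Value gap `Δ_h(s,a) = V*_h(s) - Q*_h(s,a)`. -/
noncomputable def valGap (h : ℕ) (s : S) (a : A) : ℝ := M.optVal h s - M.optQ h s a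

/-- The worst conditional value loss of policy `π`:
`max_{ℓ ∈ [H]} max_{s' : p^π_ℓ(s') > 0} (V*_ℓ(s') - V^π_ℓ(s'))`. -/
noncomputable def condRetGap (π : ℕ → S → A) : ℝ :=
  sSup {x : ℝ | ∃ ℓ, 1 ≤ ℓ ∧ ℓ ≤ M.H ∧ ∃ s' : S,
    M.visit π ℓ s' > 0 ∧ x = M.optVal ℓ s' - M.polVal π ℓ s'}

/-- Conditional return gap `Δtilde_h(s,a)`. -/
noncomputable def tildeGap (h : ℕ) (s : S) (a : A) : ℝ :=
  sInf {x : ℝ | ∃ π : ℕ → S → A, M.visitSA π h s a > 0 ∧ x = M.condRetGap π}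

/-- Return gap `Δbar_h(s,a) = V*_1(s1) - max_{π : p^π_h(s,a) > 0} V^π_1(s1)`. -/
noncomputable def barGap (h : ℕ) (s : S) (a : A) : ℝ :=
  M.optVal 1 M.s1 -
    sSup {x : ℝ | ∃ π : ℕ → S → A, M.visitSA π h s a > 0 ∧ x = M.polVal π 1 M.s1}

end MDP

/-!
With deterministic transitions a policy follows a single path, and along it the loss
`V*_ℓ - V^π_ℓ` never increases: the policy collects the step reward and moves on, while `V*_ℓ`
dominates that reward plus `V*_{ℓ+1}` at the successor. So the worst loss over visited states is
the loss `V*_1(s1) - V^π_1(s1)` at the start, and minimising it over the policies that visit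
`(s, a)` at stage `h` is exactly `Δbar_h(s, a)`.
-/

namespace MDP

variable {S A : Type} [Fintype S] [Fintype A] (M : MDP S A)

lemma polVal_eq_polQ (π : ℕ → S → A) {ℓ : ℕ} (h1 : 1 ≤ ℓ) (h2 : ℓ ≤ M.H) (s : S) :
    M.polVal π ℓ s = M.polQ π ℓ s (π ℓ s) := by
  obtain ⟨k, hk⟩ : ∃ k, M.H + 1 - ℓ = k + 1 := ⟨M.H - ℓ, by omega⟩
  simp only [polVal, hk, polQ, show M.H + 1 - (ℓ + 1) = k by omega, polValAux,
    show M.H - k = ℓ by omega]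

lemma optVal_eq_iSup_optQ {ℓ : ℕ} (h1 : 1 ≤ ℓ) (h2 : ℓ ≤ M.H) (s : S) :
    M.optVal ℓ s = ⨆ a, M.optQ ℓ s a := by
  obtain ⟨k, hk⟩ : ∃ k, M.H + 1 - ℓ = k + 1 := ⟨M.H - ℓ, by omega⟩
  simp only [optVal, hk, optQ, show M.H + 1 - (ℓ + 1) = k by omega, optValAux,
    show M.H - k = ℓ by omega]

lemma optQ_le_optVal {ℓ : ℕ} (h1 : 1 ≤ ℓ) (h2 : ℓ ≤ M.H) (s : S) (a : A) :
    M.optQ ℓ s a ≤ M.optVal ℓ s := by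
  rw [M.optVal_eq_iSup_optQ h1 h2]
  exact le_ciSup (Set.finite_range _).bddAbove a

lemma polVal_le_optVal (π : ℕ → S → A) {ℓ : ℕ} (h1 : 1 ≤ ℓ) (s : S) :
    M.polVal π ℓ s ≤ M.optVal ℓ s := by
  induction hk : M.H + 1 - ℓ generalizing ℓ s with
  | zero => simp [polVal, optVal, hk, polValAux, optValAux]
  | succ k ih =>
    have h2 : ℓ ≤ M.H := by omega
    have hnext : ∀ t, M.polVal π (ℓ + 1) t ≤ M.optVal (ℓ + 1) t :=
      fun t => ih (by omega) t (by omega)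
    calc M.polVal π ℓ s = M.polQ π ℓ s (π ℓ s) := M.polVal_eq_polQ π h1 h2 s
      _ ≤ M.optQ ℓ s (π ℓ s) := by
        unfold polQ optQ
        gcongr with t
        exacts [M.p_nonneg _ _ _ _ h1 h2, hnext t]
      _ ≤ M.optVal ℓ s := M.optQ_le_optVal h1 h2 s _

variable [DecidableEq S]

lemma visit_succ (π : ℕ → S → A) {ℓ : ℕ} (h1 : 1 ≤ ℓ) (t : S) :
    M.visit π (ℓ + 1) t = ∑ s, M.visit π ℓ s * M.p ℓ s (π ℓ s) t := by
  obtain ⟨m, rfl⟩ : ∃ m, ℓ = m + 1 := ⟨ℓ - 1, by omega⟩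
  rfl

lemma visit_nonneg (π : ℕ → S → A) {ℓ : ℕ} (hℓ : ℓ ≤ M.H) (s : S) : 0 ≤ M.visit π ℓ s := by
  induction ℓ generalizing s with
  | zero => simp [visit]
  | succ ℓ ih =>
    rcases Nat.eq_zero_or_pos ℓ with rfl | hpos
    · simp only [visit]; split_ifs <;> norm_num
    · rw [M.visit_succ π hpos]
      exact Finset.sum_nonneg fun u _ =>
        mul_nonneg (ih (by omega) u) (M.p_nonneg _ _ _ _ hpos (by omega))

lemma exists_visit_pos_of_visit_succ_pos (π : ℕ → S → A) {ℓ : ℕ} (h1 : 1 ≤ ℓ) (h2 : ℓ ≤ M.H)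
    {t : S} (ht : 0 < M.visit π (ℓ + 1) t) :
    ∃ s, 0 < M.visit π ℓ s ∧ 0 < M.p ℓ s (π ℓ s) t := by
  rw [M.visit_succ π h1, ← Finset.sum_const_zero] at ht
  obtain ⟨s, -, hs⟩ := Finset.exists_lt_of_sum_lt ht
  have hv := M.visit_nonneg π h2 s
  have hp := M.p_nonneg ℓ s (π ℓ s) t h1 h2
  exact ⟨s, pos_of_mul_pos_left hs hp, pos_of_mul_pos_right hs hv⟩

section Deterministic

variable {ℓ : ℕ} {s : S} {a : A} {t : S}

lemma eq_of_p_pos_of_p_eq_one (h1 : 1 ≤ ℓ) (h2 : ℓ ≤ M.H) (ht : M.p ℓ s a t = 1) {u : S}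
    (hu : 0 < M.p ℓ s a u) : u = t := by
  by_contra hne
  have hsum : M.p ℓ s a u + M.p ℓ s a t ≤ ∑ v, M.p ℓ s a v :=
    Finset.add_le_sum (fun v _ => M.p_nonneg ℓ s a v h1 h2) (Finset.mem_univ u)
      (Finset.mem_univ t) hne
  linarith [M.p_sum_one ℓ s a h1 h2]

lemma sum_p_mul_of_p_eq_one (h1 : 1 ≤ ℓ) (h2 : ℓ ≤ M.H) (ht : M.p ℓ s a t = 1) (f : S → ℝ) :
    ∑ u, M.p ℓ s a u * f u = f t := by
  rw [Finset.sum_eq_single_of_mem t (Finset.mem_univ t), ht, one_mul]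
  intro u _ hne
  have hp : M.p ℓ s a u = 0 :=
    le_antisymm (not_lt.mp fun hu => hne (M.eq_of_p_pos_of_p_eq_one h1 h2 ht hu))
      (M.p_nonneg ℓ s a u h1 h2)
  rw [hp, zero_mul]

lemma optVal_sub_polVal_succ_le (π : ℕ → S → A) (h1 : 1 ≤ ℓ) (h2 : ℓ ≤ M.H)
    (ht : M.p ℓ s (π ℓ s) t = 1) :
    M.optVal (ℓ + 1) t - M.polVal π (ℓ + 1) t ≤ M.optVal ℓ s - M.polVal π ℓ s := by
  have hpol := M.polVal_eq_polQ π h1 h2 s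
  have hopt := M.optQ_le_optVal h1 h2 s (π ℓ s)
  rw [polQ, M.sum_p_mul_of_p_eq_one h1 h2 ht] at hpol
  rw [optQ, M.sum_p_mul_of_p_eq_one h1 h2 ht] at hopt
  linarith

end Deterministic

variable {M}

lemma optVal_sub_polVal_le_of_visit_pos
    (hdet : ∀ h s a, 1 ≤ h → h ≤ M.H → ∃ s' : S, M.p h s a s' = 1) (π : ℕ → S → A) {ℓ : ℕ}
    (h1 : 1 ≤ ℓ) (h2 : ℓ ≤ M.H) {t : S} (ht : 0 < M.visit π ℓ t) :
    M.optVal ℓ t - M.polVal π ℓ t ≤ M.optVal 1 M.s1 - M.polVal π 1 M.s1 := by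
  induction ℓ, h1 using Nat.le_induction generalizing t with
  | base =>
    obtain rfl : t = M.s1 := by by_contra hne; simp [visit, hne] at ht
    rfl
  | succ ℓ h1 ih =>
    obtain ⟨s, hs, hst⟩ := M.exists_visit_pos_of_visit_succ_pos π h1 (by omega) ht
    obtain ⟨u, hu⟩ := hdet ℓ s (π ℓ s) h1 (by omega)
    obtain rfl := M.eq_of_p_pos_of_p_eq_one h1 (by omega) hu hst
    exact (M.optVal_sub_polVal_succ_le π h1 (by omega) hu).trans (ih (by omega) hs)

lemma condRetGap_eq_of_deterministic
    (hdet : ∀ h s a, 1 ≤ h → h ≤ M.H → ∃ s' : S, M.p h s a s' = 1) (π : ℕ → S → A) :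
    M.condRetGap π = M.optVal 1 M.s1 - M.polVal π 1 M.s1 := by
  refine IsGreatest.csSup_eq ⟨⟨1, le_rfl, M.H_pos, M.s1, by simp [visit], rfl⟩, ?_⟩
  rintro _ ⟨ℓ, h1, h2, t, ht, rfl⟩
  exact optVal_sub_polVal_le_of_visit_pos hdet π h1 h2 ht

end MDP

theorem tildeGap_eq_barGap_of_deterministic_general {S A : Type} [Fintype S]
    [Fintype A] [DecidableEq S] [DecidableEq A] (M : MDP S A)
    (hdet : ∀ h s a, 1 ≤ h → h ≤ M.H → ∃ s' : S, M.p h s a s' = 1)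
    (h : ℕ) (s : S) (a : A)
    (hex : ∃ π : ℕ → S → A, M.visitSA π h s a > 0) :
    M.tildeGap h s a = M.barGap h s a := by
  obtain ⟨π₀, hπ₀⟩ := hex
  set V := {x : ℝ | ∃ π : ℕ → S → A, M.visitSA π h s a > 0 ∧ x = M.polVal π 1 M.s1}
  have hgaps : {x : ℝ | ∃ π : ℕ → S → A, M.visitSA π h s a > 0 ∧ x = M.condRetGap π} =
      (M.optVal 1 M.s1 - ·) '' V := by
    ext x
    simp [V, M.condRetGap_eq_of_deterministic hdet, eq_comm]
  have hbdd : BddAbove V := ⟨M.optVal 1 M.s1, by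
    rintro _ ⟨π, -, rfl⟩
    exact M.polVal_le_optVal π le_rfl M.s1⟩
  rw [MDP.tildeGap, MDP.barGap, hgaps]
  exact (Antitone.map_csSup_of_continuousAt (continuous_sub_left _).continuousAt
    (fun _ _ hxy => sub_le_sub_left hxy _) (⟨_, π₀, hπ₀, rfl⟩ : V.Nonempty) hbdd).symm

/-- Proposition 1(iii): in an MDP with deterministic transitions,
the conditional return gap equals the return gap. -/
theorem tildeGap_eq_barGap_of_deterministic {S A : Type} [Fintype S] [Nonempty S]
    [Fintype A] [Nonempty A] [DecidableEq S] [DecidableEq A] (M : MDP S A)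
    (hdet : ∀ h s a, 1 ≤ h → h ≤ M.H → ∃ s' : S, M.p h s a s' = 1)
    (h : ℕ) (hh1 : 1 ≤ h) (hhH : h ≤ M.H) (s : S) (a : A)
    (hex : ∃ π : ℕ → S → A, M.visitSA π h s a > 0) :
    M.tildeGap h s a = M.barGap h s a :=
  tildeGap_eq_barGap_of_deterministic_general M hdet h s a hex
end

section
/- Lemma (deterministic form of Lemma conf-Q, fixed policy): Fix any policy π ∈ Π, and define the policy-specific optimistic and pessimistic Q-values by Q̄^π_{H+1}(s,a) = 0, Q̄^π_h(s,a) = min(H−h+1, r̂_h(s,a) + b_h(s,a) + Σ_{s'∈S} p̂_h(s'|s,a) V̄^π_{h+1}(s')) with V̄^π_h(s) = Q̄^π_h(s,π_h(s)); and Qlow^π_{H+1}(s,a) = 0, Qlow^π_h(s,a) = max(0, r̂_h(s,a) − b_h(s,a) + Σ_{s'∈S} p̂_h(s'|s,a) Vlow^π_{h+1}(s')) with Vlow^π_h(s) = Qlow^π_h(s,π_h(s)). Then for all h ∈ {1,...,H}, s ∈ S and a ∈ A: Qlow^π_h(s,a) ≤ Q^π_h(s,a) ≤ Q̄^π_h(s,a).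 -/
namespace MDP

section Estimates

variable {S A : Type} [Fintype S] [Fintype A] [DecidableEq S] [DecidableEq A] [Nonempty A]
variable (M : MDP S A)
variable (rhat : ℕ → S → A → ℝ) (phat : ℕ → S → A → S → ℝ) (b : ℕ → S → A → ℝ)

/-- Fuel-indexed optimistic value: `VbarAux M rhat phat b k s = V̄_{H+1-k}(s)`. -/
noncomputable def VbarAux : ℕ → S → ℝ
  | 0, _ => 0
  | k + 1, s => ⨆ a : A, min ((k : ℝ) + 1)
      (rhat (M.H - k) s a + b (M.H - k) s a +
        ∑ s' : S, phat (M.H - k) s a s' * VbarAux k s')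

/-- Optimistic value `V̄_h(s)`, for `1 ≤ h ≤ H + 1`. -/
noncomputable def Vbar (h : ℕ) (s : S) : ℝ := VbarAux M rhat phat b (M.H + 1 - h) s

/-- Optimistic Q-value `Q̄_h(s,a)`. -/
noncomputable def Qbar (h : ℕ) (s : S) (a : A) : ℝ :=
  min ((M.H : ℝ) - h + 1)
    (rhat h s a + b h s a + ∑ s' : S, phat h s a s' * Vbar M rhat phat b (h + 1) s')

/-- Fuel-indexed pessimistic value: `VlowAux M rhat phat b k s = Vlow_{H+1-k}(s)`. -/
noncomputable def VlowAux : ℕ → S → ℝ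
  | 0, _ => 0
  | k + 1, s => ⨆ a : A, max 0
      (rhat (M.H - k) s a - b (M.H - k) s a +
        ∑ s' : S, phat (M.H - k) s a s' * VlowAux k s')

/-- Pessimistic value `Vlow_h(s)`, for `1 ≤ h ≤ H + 1`. -/
noncomputable def Vlow (h : ℕ) (s : S) : ℝ := VlowAux M rhat phat b (M.H + 1 - h) s

/-- Pessimistic Q-value `Qlow_h(s,a)`. -/
noncomputable def Qlow (h : ℕ) (s : S) (a : A) : ℝ :=
  max 0 (rhat h s a - b h s a + ∑ s' : S, phat h s a s' * Vlow M rhat phat b (h + 1) s')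

variable (π : ℕ → S → A)

/-- Fuel-indexed policy-specific optimistic value `V̄^π`. -/
noncomputable def VbarPolAux : ℕ → S → ℝ
  | 0, _ => 0
  | k + 1, s => min ((k : ℝ) + 1)
      (rhat (M.H - k) s (π (M.H - k) s) + b (M.H - k) s (π (M.H - k) s) +
        ∑ s' : S, phat (M.H - k) s (π (M.H - k) s) s' * VbarPolAux k s')

/-- Policy-specific optimistic value `V̄^π_h(s)`. -/
noncomputable def VbarPol (h : ℕ) (s : S) : ℝ := VbarPolAux M rhat phat b π (M.H + 1 - h) s

/-- Policy-specific optimistic Q-value `Q̄^π_h(s,a)`. -/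
noncomputable def QbarPol (h : ℕ) (s : S) (a : A) : ℝ :=
  min ((M.H : ℝ) - h + 1)
    (rhat h s a + b h s a + ∑ s' : S, phat h s a s' * VbarPol M rhat phat b π (h + 1) s')

/-- Fuel-indexed policy-specific pessimistic value `Vlow^π`. -/
noncomputable def VlowPolAux : ℕ → S → ℝ
  | 0, _ => 0
  | k + 1, s => max 0
      (rhat (M.H - k) s (π (M.H - k) s) - b (M.H - k) s (π (M.H - k) s) +
        ∑ s' : S, phat (M.H - k) s (π (M.H - k) s) s' * VlowPolAux k s')

/-- Policy-specific pessimistic value `Vlow^π_h(s)`. -/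
noncomputable def VlowPol (h : ℕ) (s : S) : ℝ := VlowPolAux M rhat phat b π (M.H + 1 - h) s

/-- Policy-specific pessimistic Q-value `Qlow^π_h(s,a)`. -/
noncomputable def QlowPol (h : ℕ) (s : S) (a : A) : ℝ :=
  max 0 (rhat h s a - b h s a + ∑ s' : S, phat h s a s' * VlowPol M rhat phat b π (h + 1) s')

end Estimates

end MDP

/-!
Backward induction over the stages. The true next-stage value `V^π_{h+1}` lies in `[0, H - h]`, so
swapping `(r, p)` for `(r̂, p̂)` in the Bellman backup of `V^π_{h+1}` moves it by at most
`|r̂ - r| + (H - h) · ‖p̂ - p‖₁ ≤ b`. Hence adding (subtracting) the bonus makes the estimated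
backup of `V^π_{h+1}` an upper (lower) bound of `Q^π_h`, and by monotonicity in the value
(`p̂ ≥ 0`) so is the backup of the induction hypothesis `V̄^π_{h+1}` (`Vlow^π_{h+1}`).
Clipping at `H - h + 1` and at `0` is harmless because `Q^π_h` lies in `[0, H - h + 1]`.
-/

section Backup

variable {S : Type} [Fintype S]

theorem abs_sum_mul_sub_sum_mul_le (p q V : S → ℝ) {K : ℝ} (hV : ∀ s, |V s| ≤ K) :
    |∑ s, p s * V s - ∑ s, q s * V s| ≤ K * ∑ s, |p s - q s| := by
  rw [← Finset.sum_sub_distrib, Finset.mul_sum]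
  refine (Finset.abs_sum_le_sum_abs _ _).trans (Finset.sum_le_sum fun s _ => ?_)
  rw [← sub_mul, abs_mul, mul_comm K]
  exact mul_le_mul_of_nonneg_left (hV s) (abs_nonneg _)

variable {r rhat b K : ℝ} {p phat V : S → ℝ}

theorem add_sum_mul_mem_Icc (hr : r ∈ Set.Icc 0 1) (hp0 : ∀ s, 0 ≤ p s)
    (hp1 : ∑ s, p s = 1) (hV : ∀ s, V s ∈ Set.Icc 0 K) :
    r + ∑ s, p s * V s ∈ Set.Icc 0 (K + 1) := by
  have hnonneg : 0 ≤ ∑ s, p s * V s :=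
    Finset.sum_nonneg fun s _ => mul_nonneg (hp0 s) (hV s).1
  have hle : ∑ s, p s * V s ≤ K := calc
    ∑ s, p s * V s ≤ ∑ s, p s * K :=
      Finset.sum_le_sum fun s _ => mul_le_mul_of_nonneg_left (hV s).2 (hp0 s)
    _ = K := by rw [← Finset.sum_mul, hp1, one_mul]
  exact ⟨by linarith [hr.1], by linarith [hr.2]⟩

theorem abs_add_sum_mul_sub_add_sum_mul_le (hV : ∀ s, V s ∈ Set.Icc 0 K)
    (hconc : |rhat - r| + K * ∑ s, |phat s - p s| ≤ b) :
    |rhat + ∑ s, phat s * V s - (r + ∑ s, p s * V s)| ≤ b := by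
  have hVK : ∀ s, |V s| ≤ K := fun s =>
    abs_le.2 ⟨by linarith [(hV s).1, (hV s).2], (hV s).2⟩
  calc |rhat + ∑ s, phat s * V s - (r + ∑ s, p s * V s)|
      = |(rhat - r) + (∑ s, phat s * V s - ∑ s, p s * V s)| := by congr 1; ring
    _ ≤ |rhat - r| + |∑ s, phat s * V s - ∑ s, p s * V s| := abs_add_le _ _
    _ ≤ b := by linarith [abs_sum_mul_sub_sum_mul_le phat p V hVK]

theorem max_zero_le_add_sum_mul_le_min {Vlow Vbar : S → ℝ} (hr : r ∈ Set.Icc 0 1)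
    (hp0 : ∀ s, 0 ≤ p s) (hp1 : ∑ s, p s = 1) (hphat0 : ∀ s, 0 ≤ phat s)
    (hV : ∀ s, V s ∈ Set.Icc 0 K) (hlow : Vlow ≤ V) (hbar : V ≤ Vbar)
    (hconc : |rhat - r| + K * ∑ s, |phat s - p s| ≤ b) :
    max 0 (rhat - b + ∑ s, phat s * Vlow s) ≤ r + ∑ s, p s * V s ∧
      r + ∑ s, p s * V s ≤ min (K + 1) (rhat + b + ∑ s, phat s * Vbar s) := by
  have hQ := add_sum_mul_mem_Icc hr hp0 hp1 hV
  have herr := abs_le.1 (abs_add_sum_mul_sub_add_sum_mul_le hV hconc)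
  have hmono_low : ∑ s, phat s * Vlow s ≤ ∑ s, phat s * V s :=
    Finset.sum_le_sum fun s _ => mul_le_mul_of_nonneg_left (hlow s) (hphat0 s)
  have hmono_bar : ∑ s, phat s * V s ≤ ∑ s, phat s * Vbar s :=
    Finset.sum_le_sum fun s _ => mul_le_mul_of_nonneg_left (hbar s) (hphat0 s)
  exact ⟨max_le hQ.1 (by linarith [herr.2]), le_min hQ.2 (by linarith [herr.1])⟩

end Backup

namespace MDP

variable {S A : Type} [Fintype S] [Fintype A] (M : MDP S A)

theorem r_mem_Icc {h : ℕ} (hh1 : 1 ≤ h) (hhH : h ≤ M.H) (s : S) (a : A) :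
    M.r h s a ∈ Set.Icc 0 1 :=
  ⟨M.r_nonneg h s a hh1 hhH, M.r_le_one h s a hh1 hhH⟩

theorem polValAux_mem_Icc (π : ℕ → S → A) {k : ℕ} (hk : k ≤ M.H) (s : S) :
    M.polValAux π k s ∈ Set.Icc 0 (k : ℝ) := by
  induction k generalizing s with
  | zero => simp [polValAux]
  | succ k ih =>
    have hh1 : 1 ≤ M.H - k := by omega
    have hhH : M.H - k ≤ M.H := Nat.sub_le _ _
    rw [Nat.cast_succ]
    exact add_sum_mul_mem_Icc (M.r_mem_Icc hh1 hhH s _) (fun s' => M.p_nonneg _ s _ s' hh1 hhH)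
      (M.p_sum_one _ s _ hh1 hhH) (ih (by omega))

theorem VlowPolAux_le_polValAux_le_VbarPolAux (rhat : ℕ → S → A → ℝ)
    (phat : ℕ → S → A → S → ℝ) (b : ℕ → S → A → ℝ)
    (hphat_nonneg : ∀ h s a s', 1 ≤ h → h ≤ M.H → 0 ≤ phat h s a s')
    (hconc : ∀ h s a, 1 ≤ h → h ≤ M.H →
      |rhat h s a - M.r h s a| +
        ((M.H : ℝ) - h) * ∑ s' : S, |phat h s a s' - M.p h s a s'| ≤ b h s a)
    (π : ℕ → S → A) {k : ℕ} (hk : k ≤ M.H) :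
    VlowPolAux M rhat phat b π k ≤ M.polValAux π k ∧
      M.polValAux π k ≤ VbarPolAux M rhat phat b π k := by
  induction k with
  | zero => exact ⟨fun _ => le_rfl, fun _ => le_rfl⟩
  | succ k ih =>
    obtain ⟨hlow, hbar⟩ := ih (by omega)
    have hh1 : 1 ≤ M.H - k := by omega
    have hhH : M.H - k ≤ M.H := Nat.sub_le _ _
    have hK : (M.H : ℝ) - (M.H - k : ℕ) = k := by rw [Nat.cast_sub (by omega)]; ring
    have step (s : S) := max_zero_le_add_sum_mul_le_min (M.r_mem_Icc hh1 hhH s (π (M.H - k) s))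
      (fun s' => M.p_nonneg _ s _ s' hh1 hhH) (M.p_sum_one _ s _ hh1 hhH)
      (fun s' => hphat_nonneg _ s _ s' hh1 hhH) (M.polValAux_mem_Icc π (by omega)) hlow hbar
      (by simpa only [hK] using hconc _ s (π (M.H - k) s) hh1 hhH)
    exact ⟨fun s => (step s).1, fun s => (step s).2⟩

end MDP

theorem QlowPol_le_polQ_le_QbarPol_general {S A : Type} [Fintype S] [Fintype A] (M : MDP S A)
    (rhat : ℕ → S → A → ℝ) (phat : ℕ → S → A → S → ℝ) (b : ℕ → S → A → ℝ)
    (hphat_nonneg : ∀ h s a s', 1 ≤ h → h ≤ M.H → 0 ≤ phat h s a s')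
    (hconc : ∀ h s a, 1 ≤ h → h ≤ M.H →
      |rhat h s a - M.r h s a| +
        ((M.H : ℝ) - h) * ∑ s' : S, |phat h s a s' - M.p h s a s'| ≤ b h s a)
    (π : ℕ → S → A)
    (h : ℕ) (hh1 : 1 ≤ h) (hhH : h ≤ M.H) (s : S) (a : A) :
    MDP.QlowPol M rhat phat b π h s a ≤ M.polQ π h s a ∧
      M.polQ π h s a ≤ MDP.QbarPol M rhat phat b π h s a := by
  have hfuel : M.H + 1 - (h + 1) = M.H - h := by omega
  have hV := M.polValAux_mem_Icc π (Nat.sub_le M.H h)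
  simp only [Nat.cast_sub hhH] at hV
  obtain ⟨hlow, hbar⟩ := M.VlowPolAux_le_polValAux_le_VbarPolAux rhat phat b hphat_nonneg hconc π
    (Nat.sub_le M.H h)
  simp only [MDP.QlowPol, MDP.QbarPol, MDP.polQ, MDP.polVal, MDP.VlowPol, MDP.VbarPol, hfuel]
  exact max_zero_le_add_sum_mul_le_min (M.r_mem_Icc hh1 hhH s a)
    (fun s' => M.p_nonneg h s a s' hh1 hhH) (M.p_sum_one h s a hh1 hhH)
    (fun s' => hphat_nonneg h s a s' hh1 hhH) hV hlow hbar (hconc h s a hh1 hhH)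

/-- For any fixed policy `π`, the policy-specific pessimistic and optimistic Q-values bracket
the Q-values of `π`. -/
theorem QlowPol_le_polQ_le_QbarPol {S A : Type} [Fintype S] [Nonempty S] [Fintype A] [Nonempty A]
    [DecidableEq S] [DecidableEq A] (M : MDP S A)
    (rhat : ℕ → S → A → ℝ) (phat : ℕ → S → A → S → ℝ) (b : ℕ → S → A → ℝ)
    (hphat_nonneg : ∀ h s a s', 1 ≤ h → h ≤ M.H → 0 ≤ phat h s a s')
    (hphat_sum : ∀ h s a, 1 ≤ h → h ≤ M.H → ∑ s' : S, phat h s a s' = 1)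
    (hb_nonneg : ∀ h s a, 1 ≤ h → h ≤ M.H → 0 ≤ b h s a)
    (hconc : ∀ h s a, 1 ≤ h → h ≤ M.H →
      |rhat h s a - M.r h s a| +
        ((M.H : ℝ) - h) * ∑ s' : S, |phat h s a s' - M.p h s a s'| ≤ b h s a)
    (π : ℕ → S → A)
    (h : ℕ) (hh1 : 1 ≤ h) (hhH : h ≤ M.H) (s : S) (a : A) :
    MDP.QlowPol M rhat phat b π h s a ≤ M.polQ π h s a ∧
      M.polQ π h s a ≤ MDP.QbarPol M rhat phat b π h s a :=
  QlowPol_le_polQ_le_QbarPol_general M rhat phat b hphat_nonneg hconc π h hh1 hhH s a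
end
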